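/- arXiv:1905.12231 — 3 statements merged into one kernel-verified Lean document; each statement's English description precedes it below -/
import Mathlib

section
/- Let ε be a symmetric, integrable real random variable with a continuous positive density p_ε in a neighborhood of 0, and define T(x) := E|x + ε| − E|ε|. Then there exists a constant c₀ > 0 (one may take c₀ = p_ε(0)/2) and a neighborhood of 0 on which T(x) ≥ c₀ x². -/
/-!
By symmetry of `ε`, `E|x + ε| = E|x - ε|`, and `|x + a| + |x - a| = 2 max |x| |a|`, so
`T(x) = E (|x| - |ε|)⁺`. Near `0` the density exceeds `3 p(0) / 4`, hence
`P(|ε| ≤ a) ≥ 3 p(0) a / 2` for small `a`. With `h = |x| / 3` the pointwise bound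
`(|x| - |ε|)⁺ ≥ h (1{|ε| ≤ h} + 1{|ε| ≤ 2h})` then gives
`T(x) ≥ h (3 p(0) h / 2 + 3 p(0) h) = p(0) x² / 2`.
-/

open MeasureTheory ProbabilityTheory Real Set

lemma abs_add_add_abs_sub (x a : ℝ) : |x + a| + |x - a| = 2 * max |x| |a| := by
  cases abs_cases x <;> cases abs_cases a <;> cases abs_cases (x + a) <;>
    cases abs_cases (x - a) <;> grind

section

variable {Ω : Type*} [MeasurableSpace Ω] {P : Measure Ω}

theorem integral_abs_add_sub_integral_abs_of_identDistrib_neg [IsFiniteMeasure P] {e : Ω → ℝ}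
    (hint : Integrable e P) (hsym : IdentDistrib e (fun ω => -e ω) P P) (x : ℝ) :
    (∫ ω, |x + e ω| ∂P) - ∫ ω, |e ω| ∂P = ∫ ω, max (|x| - |e ω|) 0 ∂P := by
  have hplus : Integrable (fun ω => |x + e ω|) P := ((integrable_const x).add hint).abs
  have hminus : Integrable (fun ω => |x - e ω|) P := ((integrable_const x).sub hint).abs
  have hflip : ∫ ω, |x + e ω| ∂P = ∫ ω, |x - e ω| ∂P := by
    simpa [Function.comp_def, sub_eq_add_neg] using
      (hsym.comp (measurable_const.add measurable_id).abs).integral_eq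
  have hpart : Integrable (fun ω => max (|x| - |e ω|) 0) P :=
    ((integrable_const |x|).sub hint.abs).pos_part
  have hsum : ∫ ω, |x + e ω| ∂P + ∫ ω, |x - e ω| ∂P
      = 2 * ∫ ω, |e ω| ∂P + 2 * ∫ ω, max (|x| - |e ω|) 0 ∂P := by
    rw [← integral_add hplus hminus, ← integral_const_mul, ← integral_const_mul,
      ← integral_add (hint.abs.const_mul 2) (hpart.const_mul 2)]
    refine integral_congr_ae (Filter.Eventually.of_forall fun ω => ?_)
    have hmax := max_sub_sub_right |x| |e ω| |e ω|
    rw [sub_self] at hmax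
    linarith [abs_add_add_abs_sub x (e ω)]
  linarith

theorem mul_add_measureReal_le_integral_max_sub [IsFiniteMeasure P] {f : Ω → ℝ}
    (hf : Integrable f P) {h : ℝ} (hh : 0 ≤ h) :
    h * (P.real {ω | f ω ≤ h} + P.real {ω | f ω ≤ 2 * h})
      ≤ ∫ ω, max (3 * h - f ω) 0 ∂P := by
  have hnull : ∀ a : ℝ, NullMeasurableSet {ω | f ω ≤ a} P := fun a =>
    nullMeasurableSet_le hf.aemeasurable aemeasurable_const
  have hstep : ∀ a : ℝ, Integrable ({ω | f ω ≤ a}.indicator fun _ => h) P := fun a =>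
    (integrable_const h).indicator₀ (hnull a)
  have hstep_integral : ∀ a : ℝ,
      ∫ ω, {ω | f ω ≤ a}.indicator (fun _ => h) ω ∂P = h * P.real {ω | f ω ≤ a} := by
    intro a
    rw [integral_indicator₀ (hnull a), setIntegral_const, smul_eq_mul, mul_comm]
  have hpointwise : ∀ ω, {ω | f ω ≤ h}.indicator (fun _ => h) ω
      + {ω | f ω ≤ 2 * h}.indicator (fun _ => h) ω ≤ max (3 * h - f ω) 0 := by
    intro ω
    have hleft := le_max_left (3 * h - f ω) 0
    have hright := le_max_right (3 * h - f ω) 0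
    simp only [indicator_apply, mem_ofPred_eq]
    split_ifs <;> linarith
  calc h * (P.real {ω | f ω ≤ h} + P.real {ω | f ω ≤ 2 * h})
      = ∫ ω, ({ω | f ω ≤ h}.indicator (fun _ => h) ω
          + {ω | f ω ≤ 2 * h}.indicator (fun _ => h) ω) ∂P := by
        rw [integral_add (hstep _) (hstep _), hstep_integral, hstep_integral, mul_add]
    _ ≤ ∫ ω, max (3 * h - f ω) 0 ∂P :=
        integral_mono ((hstep _).add (hstep _))
          (((integrable_const _).sub hf).pos_part) hpointwise

theorem mul_le_measureReal_abs_le_of_density {e : Ω → ℝ} {p : ℝ → ℝ} {a c : ℝ}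
    (ha : 0 ≤ a) (hdens : P {ω | e ω ∈ Icc (-a) a} = ENNReal.ofReal (∫ t in Icc (-a) a, p t))
    (hp : IntegrableOn p (Icc (-a) a)) (hc : ∀ t ∈ Icc (-a) a, c ≤ p t) :
    2 * a * c ≤ P.real {ω | |e ω| ≤ a} := by
  have hset : {ω | |e ω| ≤ a} = {ω | e ω ∈ Icc (-a) a} := by
    ext ω
    simp [abs_le]
  have hlower := setIntegral_ge_of_const_le_real measurableSet_Icc measure_Icc_lt_top.ne hc hp
  rw [Real.volume_real_Icc, show a - -a = 2 * a by ring, max_eq_left (by linarith)] at hlower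
  rw [hset, measureReal_def, hdens, ENNReal.toReal_ofReal']
  exact (by linarith : 2 * a * c ≤ _).trans (le_max_left _ _)

end

theorem stmt4_general {Ω : Type*} [MeasurableSpace Ω] (P : Measure Ω) [IsProbabilityMeasure P]
    (e : Ω → ℝ) (hint : Integrable e P)
    (hsym : IdentDistrib e (fun ω => -e ω) P P)
    (p : ℝ → ℝ) (η : ℝ) (hη : 0 < η)
    (hcont : ContinuousOn p (Icc (-η) η)) (hpos : ∀ x ∈ Icc (-η) η, 0 < p x)
    (hdens : ∀ s : Set ℝ, MeasurableSet s → s ⊆ Icc (-η) η →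
      P {ω | e ω ∈ s} = ENNReal.ofReal (∫ x in s, p x)) :
    ∃ c₀ : ℝ, 0 < c₀ ∧ c₀ = p 0 / 2 ∧ ∃ η' : ℝ, 0 < η' ∧ ∀ x : ℝ, |x| ≤ η' →
      c₀ * x ^ 2 ≤ (∫ ω, |x + e ω| ∂P) - ∫ ω, |e ω| ∂P := by
  have hp0 : 0 < p 0 := hpos 0 ⟨by linarith, hη.le⟩
  obtain ⟨δ, hδ, hpδ⟩ := Metric.eventually_nhds_iff.mp <|
    (hcont.continuousAt (Icc_mem_nhds (by linarith) hη)).eventually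
      (eventually_ge_nhds (by linarith : 3 / 4 * p 0 < p 0))
  refine ⟨p 0 / 2, by positivity, rfl, min (δ / 2) η, lt_min (by positivity) hη, fun x hx => ?_⟩
  have hmass : ∀ a, 0 ≤ a → a ≤ |x| → 2 * a * (3 / 4 * p 0) ≤ P.real {ω | |e ω| ≤ a} := by
    intro a ha hax
    have haη : a ≤ η := by linarith [min_le_right (δ / 2) η]
    have hIcc : Icc (-a) a ⊆ Icc (-η) η := Icc_subset_Icc (by linarith) haη
    refine mul_le_measureReal_abs_le_of_density ha (hdens _ measurableSet_Icc hIcc)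
      ((hcont.mono hIcc).integrableOn_Icc) fun t ht => hpδ ?_
    rw [Real.dist_eq, sub_zero]
    linarith [abs_le.mpr ht, min_le_left (δ / 2) η]
  set h := |x| / 3 with h_def
  have hh : 0 ≤ h := by positivity
  have hmass₁ := hmass h hh (by linarith)
  have hmass₂ := hmass (2 * h) (by positivity) (by linarith)
  calc p 0 / 2 * x ^ 2 = h * (2 * h * (3 / 4 * p 0) + 2 * (2 * h) * (3 / 4 * p 0)) := by
        rw [h_def, ← sq_abs x]; ring
    _ ≤ h * (P.real {ω | |e ω| ≤ h} + P.real {ω | |e ω| ≤ 2 * h}) := by gcongr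
    _ ≤ ∫ ω, max (3 * h - |e ω|) 0 ∂P :=
        mul_add_measureReal_le_integral_max_sub hint.abs hh
    _ = (∫ ω, |x + e ω| ∂P) - ∫ ω, |e ω| ∂P := by
        rw [integral_abs_add_sub_integral_abs_of_identDistrib_neg hint hsym, h_def]
        ring_nf

/-- Let `ε` be a symmetric, integrable real random variable with a continuous positive
density `p` in a neighborhood of `0`, and define `T(x) := E|x + ε| − E|ε|`. Then there
exists a constant `c₀ > 0` (one may take `c₀ = p(0)/2`) and a neighborhood of `0` on
which `T(x) ≥ c₀ x²`. -/
theorem stmt4 {Ω : Type*} [MeasurableSpace Ω] (P : Measure Ω) [IsProbabilityMeasure P]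
    (e : Ω → ℝ) (hmeas : Measurable e) (hint : Integrable e P)
    (hsym : IdentDistrib e (fun ω => -e ω) P P)
    (p : ℝ → ℝ) (η : ℝ) (hη : 0 < η)
    (hcont : ContinuousOn p (Icc (-η) η)) (hpos : ∀ x ∈ Icc (-η) η, 0 < p x)
    (hdens : ∀ s : Set ℝ, MeasurableSet s → s ⊆ Icc (-η) η →
      P {ω | e ω ∈ s} = ENNReal.ofReal (∫ x in s, p x)) :
    ∃ c₀ : ℝ, 0 < c₀ ∧ c₀ = p 0 / 2 ∧ ∃ η' : ℝ, 0 < η' ∧ ∀ x : ℝ, |x| ≤ η' →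
      c₀ * x ^ 2 ≤ (∫ ω, |x + e ω| ∂P) - ∫ ω, |e ω| ∂P :=
  stmt4_general P e hint hsym p η hη hcont hpos hdens
end

section
/- Let l : ℝ × ℝ → ℝ be convex in its second argument with |∂_z l| ≤ L everywhere, and let f : ℝ^d → ℝ be convex with ‖∇f‖_∞ ≤ K. If λ ≥ LK then for every fixed (X, Y) ∈ ℝ^d × ℝ, sup_{x ∈ ℝ^d} { l(Y, f(x)) − λ‖x − X‖₁ } = l(Y, f(X)). -/
open Finset Set

/-- Existence of a subgradient for a convex function on `ℝ^d`. -/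
lemma exists_subgrad (d : ℕ) (f : (Fin d → ℝ) → ℝ) (hf : ConvexOn ℝ Set.univ f)
    (a : Fin d → ℝ) :
    ∃ g : Fin d → ℝ, ∀ y : Fin d → ℝ, f a + ∑ i, g i * (y i - a i) ≤ f y := by
  have hcont : Continuous f := by
    have h := hf.continuousOn isOpen_univ
    exact continuousOn_univ.mp h
  set S : Set ((Fin d → ℝ) × ℝ) := {p | f p.1 < p.2} with hS
  have hSopen : IsOpen S := isOpen_lt (hcont.comp continuous_fst) continuous_snd
  have hSconv : Convex ℝ S := by
    rintro ⟨p, t⟩ hp ⟨q, s⟩ hq α β hα hβ hαβ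
    simp only [hS, mem_setOf_eq] at hp hq ⊢
    have hcomb : f (α • p + β • q) ≤ α * f p + β * f q :=
      hf.2 (mem_univ p) (mem_univ q) hα hβ hαβ
    have hfst : (α • (p, t) + β • (q, s)).1 = α • p + β • q := rfl
    have hsnd : (α • (p, t) + β • (q, s)).2 = α * t + β * s := rfl
    rw [hfst, hsnd]
    rcases eq_or_lt_of_le hα with h0 | h0
    · have hβ1 : β = 1 := by linarith
      have : α * f p ≤ α * t := by rw [← h0]; simp
      have : β * f q < β * s := by rw [hβ1]; simpa using hq
      refine lt_of_le_of_lt hcomb ?_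
      rcases eq_or_lt_of_le hβ with hb0 | hb0
      · exfalso; rw [← h0, ← hb0] at hαβ; norm_num at hαβ
      · have h1 : α * f p ≤ α * t := by rw [← h0]; simp
        have h2 : β * f q < β * s := by exact (mul_lt_mul_iff_right₀ hb0).mpr hq
        linarith
    · have h1 : α * f p < α * t := (mul_lt_mul_iff_right₀ h0).mpr hp
      have h2 : β * f q ≤ β * s := mul_le_mul_of_nonneg_left hq.le hβ
      exact lt_of_le_of_lt hcomb (by linarith)
  have hnotmem : ((a, f a) : (Fin d → ℝ) × ℝ) ∉ S := by simp [hS]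
  obtain ⟨φ, hφ⟩ := geometric_hahn_banach_open_point hSconv hSopen hnotmem
  set c : ℝ := φ (0, 1) with hc_def
  set u : Fin d → ℝ := fun i => φ (Pi.single i 1, 0) with hu_def
  have hdec : ∀ (y : Fin d → ℝ) (t : ℝ), φ (y, t) = (∑ i, y i * u i) + t * c := by
    intro y t
    have hsplit : ((y, t) : (Fin d → ℝ) × ℝ)
        = (∑ i, y i • ((Pi.single i 1 : Fin d → ℝ), (0 : ℝ))) + t • ((0 : Fin d → ℝ), (1 : ℝ)) := by
      have h1 : (∑ i, y i • ((Pi.single i 1 : Fin d → ℝ), (0 : ℝ))).1 = y := by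
        rw [Prod.fst_sum]
        simp only [Prod.smul_fst]
        have : ∀ i : Fin d, y i • (Pi.single i 1 : Fin d → ℝ) = Pi.single i (y i) := by
          intro i
          ext j
          by_cases h : j = i
          · subst h; simp
          · simp [Pi.single_eq_of_ne h]
        rw [Finset.sum_congr rfl fun i _ => this i]
        exact Finset.univ_sum_single y
      have h2 : (∑ i, y i • ((Pi.single i 1 : Fin d → ℝ), (0 : ℝ))).2 = 0 := by
        rw [Prod.snd_sum]; simp
      rw [Prod.ext_iff]
      constructor
      · rw [Prod.fst_add, h1, Prod.smul_fst]; simp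
      · rw [Prod.snd_add, h2, Prod.smul_snd]; simp
    rw [hsplit, map_add, map_sum]
    have hterm : ∀ i : Fin d, φ (y i • ((Pi.single i 1 : Fin d → ℝ), (0 : ℝ))) = y i * u i := by
      intro i; rw [map_smul]; simp [hu_def]
    rw [Finset.sum_congr rfl fun i _ => hterm i, map_smul]
    simp [hc_def]
  have hcneg : c < 0 := by
    have hmem : ((a, f a + 1) : (Fin d → ℝ) × ℝ) ∈ S := by simp [hS]
    have := hφ _ hmem
    rw [hdec a (f a + 1), hdec a (f a)] at this
    nlinarith
  have hcne : c ≠ 0 := ne_of_lt hcneg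
  refine ⟨fun i => u i / (-c), fun y => ?_⟩
  -- first show the key inequality
  have hAB : (∑ i, y i * u i) + f y * c ≤ (∑ i, a i * u i) + f a * c := by
    set A := (∑ i, y i * u i) + f y * c with hA
    set B := (∑ i, a i * u i) + f a * c with hB
    have key : ∀ ε : ℝ, 0 < ε → A + ε * c < B := by
      intro ε hε
      have hmem : ((y, f y + ε) : (Fin d → ℝ) × ℝ) ∈ S := by simp [hS, hε]
      have := hφ _ hmem
      rw [hdec y (f y + ε), hdec a (f a)] at this
      rw [hA, hB]; nlinarith
    by_contra h
    push_neg at h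
    set ε : ℝ := (A - B) / (-c) with hε_def
    have hεpos : 0 < ε := div_pos (by linarith) (by linarith)
    have hεc : ε * c = -(A - B) := by
      have hdd : c / -c = -1 := by rw [div_neg, div_self hcne]
      calc ε * c = (A - B) * (c / -c) := by rw [hε_def]; ring
        _ = -(A - B) := by rw [hdd]; ring
    have := key ε hεpos
    rw [hεc] at this
    linarith
  have hsum : ∑ i, u i / (-c) * (y i - a i) = ((∑ i, y i * u i) - ∑ i, a i * u i) / (-c) := by
    rw [← Finset.sum_sub_distrib, Finset.sum_div]
    refine Finset.sum_congr rfl fun i _ => ?_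
    field_simp
  rw [hsum]
  have hcpos : (0 : ℝ) < -c := by linarith
  have hdiv : ((∑ i, y i * u i) - ∑ i, a i * u i) / (-c) ≤ f y - f a := by
    rw [div_le_iff₀ hcpos]
    nlinarith
  linarith

/-- Let `l : ℝ × ℝ → ℝ` be convex in its second argument with `|∂_z l| ≤ L`
everywhere, and let `f : ℝ^d → ℝ` be convex with `‖∇f‖_∞ ≤ K`. If `λ ≥ LK`, then for
every fixed `(X, Y)`, `sup_{x} { l(Y, f(x)) − λ‖x − X‖₁ } = l(Y, f(X))`,
attained at `x = X`. -/
theorem stmt10 (d : ℕ) (l : ℝ → ℝ → ℝ) (f : (Fin d → ℝ) → ℝ) (L K lam : ℝ)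
    (hlconv : ∀ y : ℝ, ConvexOn ℝ Set.univ (l y))
    (hlL : ∀ y z z' : ℝ, |l y z - l y z'| ≤ L * |z - z'|)
    (hf : ConvexOn ℝ Set.univ f)
    (hK : ∀ x g : Fin d → ℝ,
      (∀ y : Fin d → ℝ, f x + ∑ i, g i * (y i - x i) ≤ f y) → ‖g‖ ≤ K)
    (hlam : L * K ≤ lam) (X : Fin d → ℝ) (Y : ℝ) :
    IsGreatest {v : ℝ | ∃ x : Fin d → ℝ, v = l Y (f x) - lam * ∑ i, |x i - X i|}
      (l Y (f X)) := by
  have hlip : ∀ a b : Fin d → ℝ, f a - f b ≤ K * ∑ i, |a i - b i| := by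
    intro a b
    obtain ⟨g, hg⟩ := exists_subgrad d f hf a
    have hgK : ‖g‖ ≤ K := hK a g hg
    have h1 : f a - f b ≤ ∑ i, g i * (a i - b i) := by
      have := hg b
      have hneg : -∑ i, g i * (b i - a i) = ∑ i, g i * (a i - b i) := by
        rw [← Finset.sum_neg_distrib]
        exact Finset.sum_congr rfl fun i _ => by ring
      linarith [hneg ▸ (by linarith : f a - f b ≤ -∑ i, g i * (b i - a i))]
    refine h1.trans ?_
    rw [Finset.mul_sum]
    refine Finset.sum_le_sum fun i _ => ?_
    have hgi : |g i| ≤ K := by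
      have := norm_le_pi_norm g i
      rw [Real.norm_eq_abs] at this
      linarith
    calc g i * (a i - b i) ≤ |g i * (a i - b i)| := le_abs_self _
      _ = |g i| * |a i - b i| := abs_mul _ _
      _ ≤ K * |a i - b i| := mul_le_mul_of_nonneg_right hgi (abs_nonneg _)
  constructor
  · exact ⟨X, by simp⟩
  · rintro v ⟨x, rfl⟩
    have hL0 : 0 ≤ L := by
      have h := hlL Y 0 1
      rw [show |(0:ℝ) - 1| = 1 by norm_num, mul_one] at h
      exact le_trans (abs_nonneg _) h
    set S0 := ∑ i, |x i - X i| with hS0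
    have hS0nn : 0 ≤ S0 := Finset.sum_nonneg fun i _ => abs_nonneg _
    have h1 : |f x - f X| ≤ K * S0 := by
      rw [abs_sub_le_iff]
      constructor
      · exact hlip x X
      · have := hlip X x
        have hsum : ∑ i, |X i - x i| = S0 := by
          rw [hS0]; exact Finset.sum_congr rfl fun i _ => abs_sub_comm _ _
        linarith [hsum ▸ this]
    have h2 : |l Y (f x) - l Y (f X)| ≤ L * |f x - f X| := hlL Y _ _
    have h3 : l Y (f x) - l Y (f X) ≤ L * (K * S0) :=
      le_trans (le_trans (le_abs_self _) h2) (mul_le_mul_of_nonneg_left h1 hL0)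
    have hfin : L * (K * S0) ≤ lam * S0 := by
      rw [← mul_assoc]
      exact mul_le_mul_of_nonneg_right hlam hS0nn
    linarith
end

section
/- Let l : ℝ × ℝ → ℝ be convex, Lipschitz, with l(y,z) = l(−y,−z), and set L := sup |∇_z l|. Let P_n be the empirical measure of points (X_1,Y_1),…,(X_n,Y_n) in ℝ^d × ℝ, and let D be the optimal transport cost with ground cost c((x,y),(x',y')) = ‖x − x'‖₁ if y = y' and +∞ otherwise. Then for any δ ≥ 0, inf over convex Lipschitz f of sup_{P : D(P, P_n) ≤ δ} E_P[l(Y, f(X))] equals inf over convex Lipschitz f of { δ L ‖∇f‖_∞ + (1/n) Σ_{i=1}^n l(Y_i, f(X_i)) }. -/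
/-!
For a fixed `f` the inner supremum is computed exactly. The ground cost is infinite unless the
labels agree, so a coupling of finite cost only moves features, and `(x, y) ↦ l y (f x)` is
`L ‖∇f‖_∞`-Lipschitz in `x` for the `ℓ¹` norm (a subgradient bound for each factor); integrating
against near-optimal couplings gives the upper bound. Conversely, a partial subgradient of `l` of
absolute value close to `L` yields, by the symmetry of `l`, an affine minorant `c + k z` of
`l y₀` with `k` close to `L`, and a subgradient of `f` of `ℓ^∞` norm close to `‖∇f‖_∞` yields a
ray `x₀ + t v` with `‖v‖₁ ≤ 1` along which `f` grows at that rate. Moving the fraction `δ n / t` of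
one sample point a distance `t` along this ray spends the budget `δ` and gains `δ L ‖∇f‖_∞` as
`t → ∞`.
-/

open MeasureTheory Finset Set
open scoped NNReal ENNReal

/-- The ground transport cost `c((x,y),(x',y')) = ‖x − x'‖₁` if `y = y'`, `+∞` otherwise. -/
noncomputable def groundCost (d : ℕ) (p q : (Fin d → ℝ) × ℝ) : ℝ≥0∞ :=
  if p.2 = q.2 then ENNReal.ofReal (∑ i, |p.1 i - q.1 i|) else ⊤

/-- The optimal transport cost `D(μ, ν)` associated with `groundCost`. -/
noncomputable def transportCost (d : ℕ) (μ ν : Measure ((Fin d → ℝ) × ℝ)) : ℝ≥0∞ :=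
  ⨅ (π : Measure (((Fin d → ℝ) × ℝ) × ((Fin d → ℝ) × ℝ)))
    (_ : π.map Prod.fst = μ) (_ : π.map Prod.snd = ν),
      ∫⁻ p, groundCost d p.1 p.2 ∂π

/-- `‖∇f‖_∞`: the supremum over `x` of the `ℓ_∞` norms of subgradients of `f` at `x`. -/
noncomputable def gradSupNorm (d : ℕ) (f : (Fin d → ℝ) → ℝ) : ℝ :=
  sSup {c : ℝ | ∃ (x g : Fin d → ℝ),
    (∀ y : Fin d → ℝ, f x + ∑ i, g i * (y i - x i) ≤ f y) ∧ c = ‖g‖}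

/-- `L := sup |∇_z l|`: the supremum of absolute values of partial subgradients of `l`
in its second argument. -/
noncomputable def lossGradBound (l : ℝ → ℝ → ℝ) : ℝ :=
  sSup {c : ℝ | ∃ y z g : ℝ, (∀ z' : ℝ, l y z + g * (z' - z) ≤ l y z') ∧ c = |g|}

open Filter Topology

theorem exists_lt_mul_mul_of_lt_mul_sSup_mul_sSup {S T : Set ℝ} (hS : S.Nonempty)
    (hT : T.Nonempty) (hS₀ : ∀ s ∈ S, 0 ≤ s) (hT₀ : ∀ t ∈ T, 0 ≤ t) {c θ : ℝ} (hc : 0 ≤ c)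
    (h : θ < c * sSup S * sSup T) : ∃ s ∈ S, ∃ t ∈ T, θ < c * s * t := by
  have := hS.to_subtype
  have := hT.to_subtype
  rw [sSup_eq_iSup' S, Real.mul_iSup_of_nonneg hc, Real.iSup_mul_of_nonneg (Real.sSup_nonneg hT₀)]
    at h
  obtain ⟨⟨s, hs⟩, h⟩ := exists_lt_of_lt_ciSup h
  rw [sSup_eq_iSup' T, Real.mul_iSup_of_nonneg (mul_nonneg hc (hS₀ s hs))] at h
  obtain ⟨⟨t, ht⟩, h⟩ := exists_lt_of_lt_ciSup h
  exact ⟨s, hs, t, ht, h⟩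

theorem ConvexOn.exists_subgradient {E : Type*} [NormedAddCommGroup E] [NormedSpace ℝ E]
    {f : E → ℝ} (hf : ConvexOn ℝ univ f) (hfc : Continuous f) (x : E) :
    ∃ φ : E →L[ℝ] ℝ, ∀ y, f x + φ (y - x) ≤ f y := by
  obtain ⟨Φ, hΦ⟩ := geometric_hahn_banach_point_open (x := (x, f x)) hf.convex_strict_epigraph
    (by simpa using isOpen_lt (hfc.comp continuous_fst) continuous_snd) (by simp)
  -- `Φ` has a positive vertical component `c`, and `-Φ (·, 0) / c` is the subgradient.
  set c := Φ (0, 1)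
  have hΦ_mk : ∀ y t, Φ (y, t) = Φ (y, 0) + t * c := fun y t => by
    rw [show (y, t) = (y, 0) + t • ((0 : E), (1 : ℝ)) by ext <;> simp, map_add, map_smul,
      smul_eq_mul]
  have hsep : ∀ y t, f y < t → Φ (x, 0) + f x * c < Φ (y, 0) + t * c := fun y t ht => by
    have := hΦ (y, t) ⟨mem_univ y, ht⟩
    rwa [hΦ_mk x, hΦ_mk y] at this
  have hc : 0 < c := by
    have := hsep x (f x + 1) (by linarith)
    linarith [show (f x + 1) * c = f x * c + c by ring]
  have hsupp : ∀ y, (f x - f y) * c ≤ Φ (y, 0) - Φ (x, 0) := fun y => by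
    refine le_of_forall_pos_lt_add fun ε hε => ?_
    have := hsep y (f y + ε / c) (by linarith [div_pos hε hc])
    rw [add_mul, div_mul_cancel₀ ε hc.ne'] at this
    linarith
  refine ⟨-c⁻¹ • Φ.comp (.inl ℝ E ℝ), fun y => ?_⟩
  have hΦ_sub : Φ (y - x, 0) = Φ (y, 0) - Φ (x, 0) := by
    rw [← map_sub, Prod.mk_sub_mk, sub_zero]
  have := mul_le_mul_of_nonneg_left (hsupp y) (inv_nonneg.2 hc.le)
  rw [mul_comm _ c, ← mul_assoc, inv_mul_cancel₀ hc.ne', one_mul] at this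
  change f x + -c⁻¹ * Φ (y - x, 0) ≤ f y
  rw [hΦ_sub]
  linarith

theorem exists_subgradient_of_convexOn_real {h : ℝ → ℝ} (hh : ConvexOn ℝ univ h)
    (hhc : Continuous h) (z : ℝ) : ∃ g : ℝ, ∀ z', h z + g * (z' - z) ≤ h z' := by
  obtain ⟨φ, hφ⟩ := hh.exists_subgradient hhc z
  refine ⟨φ 1, fun z' => ?_⟩
  have hlin := φ.map_smul (z' - z) 1
  rw [smul_eq_mul, mul_one, smul_eq_mul] at hlin
  simpa [hlin, mul_comm] using hφ z'

theorem exists_coord_subgradient {d : ℕ} {f : (Fin d → ℝ) → ℝ} (hf : ConvexOn ℝ univ f)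
    (hfc : Continuous f) (x : Fin d → ℝ) :
    ∃ g : Fin d → ℝ, ∀ y, f x + ∑ i, g i * (y i - x i) ≤ f y := by
  classical
  obtain ⟨φ, hφ⟩ := hf.exists_subgradient hfc x
  refine ⟨fun i => φ fun j => if i = j then 1 else 0, fun y => ?_⟩
  have hsub := hφ y
  rw [show φ (y - x) = _ from LinearMap.pi_apply_eq_sum_univ (φ : (Fin d → ℝ) →ₗ[ℝ] ℝ) (y - x)]
    at hsub
  simpa [mul_comm] using hsub

theorem abs_le_of_subgradient_of_lipschitzWith {h : ℝ → ℝ} {C : ℝ≥0} (hh : LipschitzWith C h)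
    {z g : ℝ} (hg : ∀ z', h z + g * (z' - z) ≤ h z') : |g| ≤ C := by
  have h_right := hg (z + 1)
  have h_left := hg (z - 1)
  have d_right := hh.dist_le_mul (z + 1) z
  have d_left := hh.dist_le_mul (z - 1) z
  simp only [Real.dist_eq, add_sub_cancel_left, sub_sub_cancel_left, abs_one, abs_neg,
    mul_one] at h_right h_left d_right d_left
  rw [abs_le]
  constructor <;> linarith [le_abs_self (h (z + 1) - h z), le_abs_self (h (z - 1) - h z)]

theorem norm_le_of_coord_subgradient {d : ℕ} {f : (Fin d → ℝ) → ℝ} {C : ℝ≥0}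
    (hf : LipschitzWith C f) {x g : Fin d → ℝ}
    (hg : ∀ y, f x + ∑ i, g i * (y i - x i) ≤ f y) : ‖g‖ ≤ C := by
  refine (pi_norm_le_iff_of_nonneg C.coe_nonneg).2 fun i => ?_
  have hline : LipschitzWith 1 fun t : ℝ => x + Pi.single i t :=
    LipschitzWith.of_dist_le_mul fun s t => by
      simp [dist_eq_norm, ← Pi.single_sub, Pi.norm_single]
  refine abs_le_of_subgradient_of_lipschitzWith (z := 0)
    (by simpa only [mul_one] using hf.comp hline) fun t => ?_
  have hsum : ∑ j, g j * ((x + Pi.single i t : Fin d → ℝ) j - x j) = g i * t := by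
    simp [Pi.single_apply]
  have := hg (x + Pi.single i t)
  rw [hsum] at this
  simpa using this

theorem exists_sum_abs_le_one_sum_mul_eq_norm {d : ℕ} (g : Fin d → ℝ) :
    ∃ v : Fin d → ℝ, ∑ i, |v i| ≤ 1 ∧ ∑ i, g i * v i = ‖g‖ := by
  cases isEmpty_or_nonempty (Fin d)
  · exact ⟨0, by simp, by simp [Subsingleton.elim g 0]⟩
  obtain ⟨j, -, hj⟩ := exists_max_image univ (fun i => ‖g i‖) univ_nonempty
  have hgj : ‖g‖ = |g j| := le_antisymm
    ((pi_norm_le_iff_of_nonneg (norm_nonneg _)).2 fun i => hj i (mem_univ i))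
    (norm_le_pi_norm g j)
  refine ⟨Pi.single j (SignType.sign (g j) : ℝ), ?_, ?_⟩
  · simp only [Pi.single_apply, apply_ite, abs_zero, sum_ite_eq']
    rcases SignType.sign (g j) with _ | _ | _ <;> simp
  · simp [Pi.single_apply, hgj, self_mul_sign]

theorem abs_sum_mul_le_norm_mul_sum_abs {d : ℕ} (g v : Fin d → ℝ) :
    |∑ i, g i * v i| ≤ ‖g‖ * ∑ i, |v i| := by
  rw [mul_sum]
  refine (abs_sum_le_sum_abs _ _).trans (sum_le_sum fun i _ => ?_)
  rw [abs_mul]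
  exact mul_le_mul_of_nonneg_right (norm_le_pi_norm g i) (abs_nonneg _)

section GradSupNorm

variable {d : ℕ} {f : (Fin d → ℝ) → ℝ} {C : ℝ≥0}

theorem gradSupNorm_nonneg : 0 ≤ gradSupNorm d f :=
  Real.sSup_nonneg (by rintro _ ⟨x, g, -, rfl⟩; exact norm_nonneg g)

theorem norm_le_gradSupNorm (hf : LipschitzWith C f) {x g : Fin d → ℝ}
    (hg : ∀ y, f x + ∑ i, g i * (y i - x i) ≤ f y) : ‖g‖ ≤ gradSupNorm d f :=
  le_csSup ⟨C, by rintro _ ⟨x, g, hg, rfl⟩; exact norm_le_of_coord_subgradient hf hg⟩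
    ⟨x, g, hg, rfl⟩

theorem abs_sub_le_gradSupNorm_mul (hfc : ConvexOn ℝ univ f) (hf : LipschitzWith C f)
    (x y : Fin d → ℝ) : |f x - f y| ≤ gradSupNorm d f * ∑ i, |x i - y i| := by
  have key : ∀ x y : Fin d → ℝ, f x - f y ≤ gradSupNorm d f * ∑ i, |x i - y i| := by
    intro x y
    obtain ⟨g, hg⟩ := exists_coord_subgradient hfc hf.continuous x
    have hsum := abs_sum_mul_le_norm_mul_sum_abs g (y - x)
    simp only [Pi.sub_apply, abs_sub_comm (y _)] at hsum
    calc f x - f y ≤ -∑ i, g i * (y i - x i) := by linarith [hg y]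
      _ ≤ ‖g‖ * ∑ i, |x i - y i| := (neg_le_abs _).trans hsum
      _ ≤ gradSupNorm d f * ∑ i, |x i - y i| :=
        mul_le_mul_of_nonneg_right (norm_le_gradSupNorm hf hg) (sum_nonneg fun i _ => abs_nonneg _)
  refine abs_sub_le_iff.2 ⟨key x y, ?_⟩
  simpa only [abs_sub_comm (y _)] using key y x

theorem exists_ray_minorant {x g : Fin d → ℝ} (hg : ∀ y, f x + ∑ i, g i * (y i - x i) ≤ f y)
    (x₀ : Fin d → ℝ) :
    ∃ v : Fin d → ℝ, ∑ i, |v i| ≤ 1 ∧ ∃ c, ∀ t : ℝ, c + ‖g‖ * t ≤ f (x₀ + t • v) := by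
  obtain ⟨v, hv, hgv⟩ := exists_sum_abs_le_one_sum_mul_eq_norm g
  refine ⟨v, hv, f x + ∑ i, g i * (x₀ i - x i), fun t => ?_⟩
  have hsum : ∑ i, g i * ((x₀ + t • v) i - x i) = ∑ i, g i * (x₀ i - x i) + ‖g‖ * t := by
    rw [← hgv, sum_mul, ← sum_add_distrib]
    exact sum_congr rfl fun i _ => by simp only [Pi.add_apply, Pi.smul_apply, smul_eq_mul]; ring
  linarith [hg (x₀ + t • v)]

end GradSupNorm

section LossGradBound

variable {l : ℝ → ℝ → ℝ} {C : ℝ≥0}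

theorem lossGradBound_nonneg : 0 ≤ lossGradBound l :=
  Real.sSup_nonneg (by rintro _ ⟨y, z, g, -, rfl⟩; exact abs_nonneg g)

theorem LipschitzWith.uncurry_left (hl : LipschitzWith C fun p : ℝ × ℝ => l p.1 p.2) (y : ℝ) :
    LipschitzWith C (l y) := by
  have h := hl.comp (LipschitzWith.prodMk_left y)
  rwa [mul_one] at h

theorem LipschitzWith.uncurry_right (hl : LipschitzWith C fun p : ℝ × ℝ => l p.1 p.2) (z : ℝ) :
    LipschitzWith C fun y => l y z := by
  have h := hl.comp (LipschitzWith.prodMk_right z)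
  rwa [mul_one] at h

theorem ConvexOn.uncurry_left (hl : ConvexOn ℝ univ fun p : ℝ × ℝ => l p.1 p.2) (y : ℝ) :
    ConvexOn ℝ univ (l y) := by
  simpa [Function.comp_def] using (hl.translate_right (y, 0)).comp_linearMap (.inr ℝ ℝ ℝ)

theorem abs_le_lossGradBound (hl : LipschitzWith C fun p : ℝ × ℝ => l p.1 p.2) {y z g : ℝ}
    (hg : ∀ z', l y z + g * (z' - z) ≤ l y z') : |g| ≤ lossGradBound l :=
  le_csSup ⟨C, by
    rintro _ ⟨y, z, g, hg, rfl⟩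
    exact abs_le_of_subgradient_of_lipschitzWith (hl.uncurry_left y) hg⟩ ⟨y, z, g, hg, rfl⟩

theorem abs_sub_le_lossGradBound_mul (hlc : ConvexOn ℝ univ fun p : ℝ × ℝ => l p.1 p.2)
    (hl : LipschitzWith C fun p : ℝ × ℝ => l p.1 p.2) (y a b : ℝ) :
    |l y a - l y b| ≤ lossGradBound l * |a - b| := by
  have key : ∀ a b, l y a - l y b ≤ lossGradBound l * |a - b| := by
    intro a b
    obtain ⟨g, hg⟩ :=
      exists_subgradient_of_convexOn_real (hlc.uncurry_left y) (hl.uncurry_left y).continuous a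
    calc l y a - l y b ≤ -(g * (b - a)) := by linarith [hg b]
      _ ≤ |g| * |a - b| := by rw [abs_sub_comm a b, ← abs_mul]; exact neg_le_abs _
      _ ≤ lossGradBound l * |a - b| :=
        mul_le_mul_of_nonneg_right (abs_le_lossGradBound hl hg) (abs_nonneg _)
  exact abs_sub_le_iff.2 ⟨key a b, abs_sub_comm a b ▸ key b a⟩

/-- The symmetry of `l` turns a partial subgradient `g` into one of slope `|g|`, and the Lipschitz
bound in `y` transports the resulting affine minorant from one label to any other. -/
theorem exists_affine_minorant (hl : LipschitzWith C fun p : ℝ × ℝ => l p.1 p.2)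
    (hsymm : ∀ y z, l y z = l (-y) (-z)) {y z g : ℝ} (hg : ∀ z', l y z + g * (z' - z) ≤ l y z')
    (y₀ : ℝ) : ∃ c, ∀ z', c + |g| * z' ≤ l y₀ z' := by
  obtain ⟨y₁, z₁, hg₁⟩ : ∃ y₁ z₁, ∀ z', l y₁ z₁ + |g| * (z' - z₁) ≤ l y₁ z' := by
    rcases le_or_gt 0 g with hg0 | hg0
    · exact ⟨y, z, by simpa only [abs_of_nonneg hg0] using hg⟩
    · refine ⟨-y, -z, fun z' => ?_⟩
      have := hg (-z')
      rw [hsymm y z, hsymm y (-z'), neg_neg] at this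
      rw [abs_of_neg hg0]
      linarith
  refine ⟨l y₁ z₁ - |g| * z₁ - C * |y₀ - y₁|, fun z' => ?_⟩
  have hy := (hl.uncurry_right z').dist_le_mul y₀ y₁
  rw [Real.dist_eq, Real.dist_eq] at hy
  linarith [hg₁ z', neg_abs_le (l y₀ z' - l y₁ z')]

end LossGradBound

section Empirical

variable {α : Type*} [MeasurableSpace α] {n : ℕ}

noncomputable def empiricalMeasure (p : Fin n → α) : Measure α :=
  (n : ℝ≥0∞)⁻¹ • ∑ i, Measure.dirac (p i)

theorem isProbabilityMeasure_empiricalMeasure (hn : 0 < n) (p : Fin n → α) :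
    IsProbabilityMeasure (empiricalMeasure p) := by
  constructor
  simp [empiricalMeasure, ENNReal.inv_mul_cancel (Nat.cast_ne_zero.2 hn.ne')]

theorem map_empiricalMeasure {β : Type*} [MeasurableSpace β] {g : α → β} (hg : Measurable g)
    (p : Fin n → α) : (empiricalMeasure p).map g = empiricalMeasure (g ∘ p) := by
  rw [empiricalMeasure, empiricalMeasure, ← Measure.mapₗ_apply_of_measurable hg, map_smul, map_sum]
  simp only [Measure.mapₗ_apply_of_measurable hg, Measure.map_dirac' hg, Function.comp_apply]

variable [MeasurableSingletonClass α]

theorem lintegral_empiricalMeasure (φ : α → ℝ≥0∞) (p : Fin n → α) :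
    ∫⁻ q, φ q ∂empiricalMeasure p = (n : ℝ≥0∞)⁻¹ * ∑ i, φ (p i) := by
  simp [empiricalMeasure, lintegral_finsetSum_measure]

theorem integrable_empiricalMeasure (φ : α → ℝ) (p : Fin n → α) :
    Integrable φ (empiricalMeasure p) := by
  rcases n.eq_zero_or_pos with rfl | hn
  · simp [empiricalMeasure]
  exact (integrable_finsetSum_measure.2 fun i _ => integrable_dirac enorm_lt_top).smul_measure
    (ENNReal.inv_ne_top.2 (Nat.cast_ne_zero.2 hn.ne'))

theorem integral_empiricalMeasure (φ : α → ℝ) (p : Fin n → α) :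
    ∫ q, φ q ∂empiricalMeasure p = (n : ℝ)⁻¹ * ∑ i, φ (p i) := by
  simp [empiricalMeasure, integral_finsetSum_measure fun i _ => integrable_dirac enorm_lt_top]

end Empirical

section Transport

variable {d n : ℕ}

theorem measurable_groundCost :
    Measurable fun p : ((Fin d → ℝ) × ℝ) × ((Fin d → ℝ) × ℝ) => groundCost d p.1 p.2 :=
  Measurable.ite (measurableSet_eq_fun measurable_fst.snd measurable_snd.snd)
    (ENNReal.measurable_ofReal.comp (by fun_prop)) measurable_const

@[simp]
theorem groundCost_self (p : (Fin d → ℝ) × ℝ) : groundCost d p p = 0 := by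
  simp [groundCost]

theorem transportCost_le_lintegral {μ ν : Measure ((Fin d → ℝ) × ℝ)}
    {π : Measure (((Fin d → ℝ) × ℝ) × ((Fin d → ℝ) × ℝ))} (h₁ : π.map Prod.fst = μ)
    (h₂ : π.map Prod.snd = ν) : transportCost d μ ν ≤ ∫⁻ p, groundCost d p.1 p.2 ∂π :=
  iInf_le_of_le π (iInf_le_of_le h₁ (iInf_le _ h₂))

theorem integral_le_integral_add_mul_toReal_lintegral {α : Type*} [MeasurableSpace α]
    {c : α → α → ℝ≥0∞} (hc : Measurable fun p : α × α => c p.1 p.2) {φ : α → ℝ}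
    (hφ : Measurable φ) {K : ℝ} (hφc : ∀ p q, c p q ≠ ⊤ → |φ p - φ q| ≤ K * (c p q).toReal)
    {μ ν : Measure α} (hν : Integrable φ ν) {π : Measure (α × α)} (h₁ : π.map Prod.fst = μ)
    (h₂ : π.map Prod.snd = ν) (hπ : ∫⁻ p, c p.1 p.2 ∂π ≠ ⊤) :
    ∫ q, φ q ∂μ ≤ ∫ q, φ q ∂ν + K * (∫⁻ p, c p.1 p.2 ∂π).toReal := by
  have hcost : Integrable (fun p => (c p.1 p.2).toReal) π :=
    integrable_toReal_of_lintegral_ne_top hc.aemeasurable hπ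
  have hsnd : Integrable (fun p : α × α => φ p.2) π := by
    rw [← h₂] at hν
    exact hν.comp_measurable measurable_snd
  have hbound : ∀ᵐ p ∂π, |φ p.1 - φ p.2| ≤ K * (c p.1 p.2).toReal :=
    (ae_lt_top hc hπ).mono fun p hp => hφc _ _ hp.ne
  have hdiff : Integrable (fun p : α × α => φ p.1 - φ p.2) π :=
    (hcost.const_mul K).mono'
      ((hφ.comp measurable_fst).sub (hφ.comp measurable_snd)).aestronglyMeasurable hbound
  rw [← h₁, ← h₂, integral_map measurable_fst.aemeasurable hφ.aestronglyMeasurable,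
    integral_map measurable_snd.aemeasurable hφ.aestronglyMeasurable,
    ← integral_toReal hc.aemeasurable (ae_lt_top hc hπ), ← integral_const_mul,
    ← integral_add hsnd (hcost.const_mul K)]
  refine integral_mono_ae
    ((hdiff.add hsnd).congr (.of_forall fun p => sub_add_cancel (φ p.1) (φ p.2)))
    (hsnd.add (hcost.const_mul K)) ?_
  filter_upwards [hbound] with p hp
  linarith [le_abs_self (φ p.1 - φ p.2)]

/-- The easy half of Kantorovich–Rubinstein duality for `groundCost`. -/
theorem integral_le_integral_add_mul_of_transportCost_le {φ : (Fin d → ℝ) × ℝ → ℝ}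
    (hφ : Measurable φ) {K : ℝ} (hK : 0 ≤ K)
    (hφK : ∀ x x' y, |φ (x, y) - φ (x', y)| ≤ K * ∑ i, |x i - x' i|)
    {μ ν : Measure ((Fin d → ℝ) × ℝ)} (hν : Integrable φ ν) {δ : ℝ} (hδ : 0 ≤ δ)
    (hμν : transportCost d μ ν ≤ ENNReal.ofReal δ) :
    ∫ q, φ q ∂μ ≤ ∫ q, φ q ∂ν + K * δ := by
  have hφc : ∀ p q, groundCost d p q ≠ ⊤ → |φ p - φ q| ≤ K * (groundCost d p q).toReal := by
    rintro ⟨x, y⟩ ⟨x', y'⟩ hpq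
    by_cases hy : y = y'
    · subst hy
      simpa [groundCost, ENNReal.toReal_ofReal (sum_nonneg fun i _ => abs_nonneg _)]
        using hφK x x' y
    · simp [groundCost, hy] at hpq
  have key : ∀ r > δ, ∫ q, φ q ∂μ ≤ ∫ q, φ q ∂ν + K * r := by
    intro r hr
    have hlt : transportCost d μ ν < ENNReal.ofReal r :=
      hμν.trans_lt ((ENNReal.ofReal_lt_ofReal_iff (hδ.trans_lt hr)).2 hr)
    simp only [transportCost, iInf_lt_iff] at hlt
    obtain ⟨π, h₁, h₂, hπ⟩ := hlt
    refine (integral_le_integral_add_mul_toReal_lintegral measurable_groundCost hφ hφc hν h₁ h₂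
      (ne_top_of_lt hπ)).trans ?_
    gcongr
    exact ENNReal.toReal_le_of_le_ofReal (hδ.trans hr.le) hπ.le
  refine ge_of_tendsto (x := 𝓝[>] δ) ?_ (eventually_nhdsWithin_of_forall key)
  exact ((continuous_const.add (continuous_const.mul continuous_id)).tendsto δ).mono_left
    nhdsWithin_le_nhds

end Transport

section MoveMass

variable {d n : ℕ}

theorem transportCost_add_smul_empiricalMeasure_le {a b : ℝ≥0∞} (hab : a + b = 1)
    (p q : Fin n → (Fin d → ℝ) × ℝ) :
    transportCost d (a • empiricalMeasure p + b • empiricalMeasure q) (empiricalMeasure p) ≤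
      b * ((n : ℝ≥0∞)⁻¹ * ∑ i, groundCost d (q i) (p i)) := by
  let π := a • empiricalMeasure (fun i => (p i, p i)) + b • empiricalMeasure (fun i => (q i, p i))
  have h₁ : π.map Prod.fst = a • empiricalMeasure p + b • empiricalMeasure q := by
    simp only [π, Measure.map_add _ _ measurable_fst, Measure.map_smul,
      map_empiricalMeasure measurable_fst]
    rfl
  have h₂ : π.map Prod.snd = empiricalMeasure p := by
    simp only [π, Measure.map_add _ _ measurable_snd, Measure.map_smul,
      map_empiricalMeasure measurable_snd]
    change a • empiricalMeasure p + b • empiricalMeasure p = empiricalMeasure p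
    rw [← add_smul, hab, one_smul]
  refine (transportCost_le_lintegral h₁ h₂).trans_eq ?_
  simp [π, lintegral_add_measure, lintegral_empiricalMeasure]

theorem sum_groundCost_update [DecidableEq (Fin n)] (p : Fin n → (Fin d → ℝ) × ℝ) (i₀ : Fin n)
    (x : Fin d → ℝ) :
    ∑ i, groundCost d (Function.update p i₀ (x, (p i₀).2) i) (p i) =
      ENNReal.ofReal (∑ j, |x j - (p i₀).1 j|) := by
  rw [sum_eq_single i₀ (fun i _ hi => by simp [hi]) (by simp)]
  simp [groundCost]

theorem sum_update_sub_sum {ι α : Type*} [Fintype ι] [DecidableEq ι] (φ : α → ℝ) (p : ι → α)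
    (i₀ : ι) (q : α) :
    ∑ i, φ (Function.update p i₀ q i) - ∑ i, φ (p i) = φ q - φ (p i₀) := by
  simp only [Function.apply_update (fun _ => φ), sum_update_of_mem (mem_univ i₀),
    sum_eq_add_sum_sdiff_singleton i₀ (fun i => φ (p i)) (absurd (mem_univ i₀))]
  ring

/-- `P` moves the fraction `m` of the mass at the sample point `p i₀` to `(x, (p i₀).2)`. -/
theorem exists_transportCost_le_integral_eq (hn : 0 < n) (p : Fin n → (Fin d → ℝ) × ℝ)
    (i₀ : Fin n) (x : Fin d → ℝ) {m : ℝ} (hm₀ : 0 ≤ m) (hm₁ : m ≤ 1)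
    (φ : (Fin d → ℝ) × ℝ → ℝ) :
    ∃ P : Measure ((Fin d → ℝ) × ℝ), IsProbabilityMeasure P ∧
      transportCost d P (empiricalMeasure p) ≤
        ENNReal.ofReal (m / n * ∑ j, |x j - (p i₀).1 j|) ∧
      ∫ q, φ q ∂P = (n : ℝ)⁻¹ * ∑ i, φ (p i) + m / n * (φ (x, (p i₀).2) - φ (p i₀)) := by
  classical
  set q := Function.update p i₀ (x, (p i₀).2)
  have hab : ENNReal.ofReal (1 - m) + ENNReal.ofReal m = 1 := by
    rw [← ENNReal.ofReal_add (by linarith) hm₀, sub_add_cancel, ENNReal.ofReal_one]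
  have := isProbabilityMeasure_empiricalMeasure hn p
  have := isProbabilityMeasure_empiricalMeasure hn q
  refine ⟨ENNReal.ofReal (1 - m) • empiricalMeasure p + ENNReal.ofReal m • empiricalMeasure q,
    ⟨by simp [hab]⟩, ?_, ?_⟩
  · refine (transportCost_add_smul_empiricalMeasure_le hab p q).trans_eq ?_
    rw [sum_groundCost_update, ← ENNReal.ofReal_natCast,
      ← ENNReal.ofReal_inv_of_pos (by positivity), ← ENNReal.ofReal_mul (by positivity),
      ← ENNReal.ofReal_mul hm₀]
    ring_nf
  · rw [integral_add_measure ((integrable_empiricalMeasure φ p).smul_measure ENNReal.ofReal_ne_top)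
      ((integrable_empiricalMeasure φ q).smul_measure ENNReal.ofReal_ne_top),
      integral_smul_measure, integral_smul_measure, integral_empiricalMeasure,
      integral_empiricalMeasure, ENNReal.toReal_ofReal hm₀, ENNReal.toReal_ofReal (by linarith),
      smul_eq_mul, smul_eq_mul, ← sum_update_sub_sum φ p i₀ (x, (p i₀).2)]
    ring

end MoveMass

section Duality

variable {d n : ℕ}

/-- Sending a vanishing fraction `δ n / t` of one sample point a distance `t` along a ray on which
`φ` grows with slope `s` spends the whole budget `δ` and gains `δ s` in the limit `t → ∞`. -/
theorem exists_lt_integral_of_ray_minorant (hn : 0 < n) (p : Fin n → (Fin d → ℝ) × ℝ)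
    (i₀ : Fin n) {v : Fin d → ℝ} (hv : ∑ j, |v j| ≤ 1) {φ : (Fin d → ℝ) × ℝ → ℝ} {c s δ : ℝ}
    (hδ : 0 ≤ δ) (hray : ∀ t : ℝ, c + s * t ≤ φ ((p i₀).1 + t • v, (p i₀).2)) {w : ℝ}
    (hw : w < (n : ℝ)⁻¹ * ∑ i, φ (p i) + δ * s) :
    ∃ P : Measure ((Fin d → ℝ) × ℝ), IsProbabilityMeasure P ∧
      transportCost d P (empiricalMeasure p) ≤ ENNReal.ofReal δ ∧ w < ∫ q, φ q ∂P := by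
  set A := (n : ℝ)⁻¹ * ∑ i, φ (p i)
  set φ₀ := φ (p i₀)
  have hlim : Tendsto (fun t : ℝ => A + δ * s + δ * (c - φ₀) * t⁻¹) atTop (𝓝 (A + δ * s)) := by
    simpa using tendsto_const_nhds.add (tendsto_inv_atTop_zero.const_mul (δ * (c - φ₀)))
  obtain ⟨t, hwt, ht⟩ :=
    ((hlim.eventually (lt_mem_nhds hw)).and (eventually_ge_atTop (δ * n + 1))).exists
  have hn_pos : (0 : ℝ) < n := Nat.cast_pos.2 hn
  have ht₀ : 0 < t := by nlinarith
  obtain ⟨P, hP, hcost, hint⟩ := exists_transportCost_le_integral_eq hn p i₀ ((p i₀).1 + t • v)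
    (m := δ * n / t) (by positivity) ((div_le_one ht₀).2 (by linarith)) φ
  have hscale : δ * n / t / n = δ * t⁻¹ := by field_simp
  refine ⟨P, hP, hcost.trans (ENNReal.ofReal_le_ofReal ?_), hwt.trans_le ?_⟩
  · have hdist : ∑ j, |((p i₀).1 + t • v) j - (p i₀).1 j| = t * ∑ j, |v j| := by
      simp [abs_mul, abs_of_pos ht₀, mul_sum]
    rw [hdist, hscale, show δ * t⁻¹ * (t * ∑ j, |v j|) = δ * ∑ j, |v j| by field_simp]
    exact mul_le_of_le_one_right hδ hv
  · have hgain : δ * t⁻¹ * (c + s * t - φ₀) ≤ δ * t⁻¹ * (φ ((p i₀).1 + t • v, (p i₀).2) - φ₀) :=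
      mul_le_mul_of_nonneg_left (by linarith [hray t]) (by positivity)
    rw [hint, hscale]
    have hexpand : δ * t⁻¹ * (c + s * t - φ₀) = δ * s + δ * (c - φ₀) * t⁻¹ := by
      field_simp
      ring
    linarith

variable {l : ℝ → ℝ → ℝ} {Cl Cf : ℝ≥0} {f : (Fin d → ℝ) → ℝ}

theorem integral_loss_le (hlc : ConvexOn ℝ univ fun p : ℝ × ℝ => l p.1 p.2)
    (hl : LipschitzWith Cl fun p : ℝ × ℝ => l p.1 p.2) (hfc : ConvexOn ℝ univ f)
    (hf : LipschitzWith Cf f) (p : Fin n → (Fin d → ℝ) × ℝ) {δ : ℝ} (hδ : 0 ≤ δ)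
    {P : Measure ((Fin d → ℝ) × ℝ)}
    (hP : transportCost d P (empiricalMeasure p) ≤ ENNReal.ofReal δ) :
    ∫ q, l q.2 (f q.1) ∂P ≤
      δ * lossGradBound l * gradSupNorm d f + (n : ℝ)⁻¹ * ∑ i, l (p i).2 (f (p i).1) := by
  have hφ : Continuous fun q : (Fin d → ℝ) × ℝ => l q.2 (f q.1) :=
    hl.continuous.comp (continuous_snd.prodMk (hf.continuous.comp continuous_fst))
  have hφK : ∀ x x' y, |l y (f x) - l y (f x')| ≤
      lossGradBound l * gradSupNorm d f * ∑ i, |x i - x' i| := fun x x' y =>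
    calc |l y (f x) - l y (f x')| ≤ lossGradBound l * |f x - f x'| :=
          abs_sub_le_lossGradBound_mul hlc hl y _ _
      _ ≤ lossGradBound l * (gradSupNorm d f * ∑ i, |x i - x' i|) :=
          mul_le_mul_of_nonneg_left (abs_sub_le_gradSupNorm_mul hfc hf x x') lossGradBound_nonneg
      _ = _ := (mul_assoc _ _ _).symm
  have := integral_le_integral_add_mul_of_transportCost_le hφ.measurable
    (mul_nonneg lossGradBound_nonneg gradSupNorm_nonneg) hφK (integrable_empiricalMeasure _ p) hδ hP
  rw [integral_empiricalMeasure] at this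
  linarith

theorem exists_lt_integral_loss (hn : 0 < n) (hlc : ConvexOn ℝ univ fun p : ℝ × ℝ => l p.1 p.2)
    (hl : LipschitzWith Cl fun p : ℝ × ℝ => l p.1 p.2) (hsymm : ∀ y z, l y z = l (-y) (-z))
    (hfc : ConvexOn ℝ univ f) (hf : LipschitzWith Cf f) (p : Fin n → (Fin d → ℝ) × ℝ) {δ : ℝ}
    (hδ : 0 ≤ δ) {w : ℝ}
    (hw : w < δ * lossGradBound l * gradSupNorm d f + (n : ℝ)⁻¹ * ∑ i, l (p i).2 (f (p i).1)) :
    ∃ P : Measure ((Fin d → ℝ) × ℝ), IsProbabilityMeasure P ∧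
      transportCost d P (empiricalMeasure p) ≤ ENNReal.ofReal δ ∧ w < ∫ q, l q.2 (f q.1) ∂P := by
  obtain ⟨g₀, hg₀⟩ :=
    exists_subgradient_of_convexOn_real (hlc.uncurry_left 0) (hl.uncurry_left 0).continuous 0
  obtain ⟨g₀', hg₀'⟩ := exists_coord_subgradient hfc hf.continuous 0
  unfold lossGradBound gradSupNorm at hw
  obtain ⟨_, ⟨y, z, g, hg, rfl⟩, _, ⟨x, g', hg', rfl⟩, hslope⟩ :=
    exists_lt_mul_mul_of_lt_mul_sSup_mul_sSup (by exact ⟨_, 0, 0, g₀, hg₀, rfl⟩)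
      (by exact ⟨_, 0, g₀', hg₀', rfl⟩) (by rintro _ ⟨y, z, g, -, rfl⟩; exact abs_nonneg g)
      (by rintro _ ⟨x, g, -, rfl⟩; exact norm_nonneg g) hδ (sub_lt_iff_lt_add.2 hw)
  let i₀ : Fin n := ⟨0, hn⟩
  obtain ⟨cl, hcl⟩ := exists_affine_minorant hl hsymm hg (p i₀).2
  obtain ⟨v, hv, cf, hcf⟩ := exists_ray_minorant hg' (p i₀).1
  have hray : ∀ t : ℝ, (cl + |g| * cf) + |g| * ‖g'‖ * t ≤ l (p i₀).2 (f ((p i₀).1 + t • v)) :=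
    fun t => by nlinarith [hcl (f ((p i₀).1 + t • v)), hcf t, abs_nonneg g]
  exact exists_lt_integral_of_ray_minorant hn p i₀ hv hδ hray (by linarith)

end Duality

/-- Strong duality for distributionally robust convex regression: for any `δ ≥ 0`,
`inf_f sup_{P : D(P,P_n) ≤ δ} E_P[l(Y, f(X))]`
`= inf_f { δ L ‖∇f‖_∞ + (1/n) Σ l(Y_i, f(X_i)) }`,
the infima running over convex Lipschitz `f : ℝ^d → ℝ`. -/
theorem stmt12 (d n : ℕ) (hn : 0 < n) (l : ℝ → ℝ → ℝ)
    (hlconv : ConvexOn ℝ Set.univ (fun p : ℝ × ℝ => l p.1 p.2))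
    (hllip : ∃ C : ℝ≥0, LipschitzWith C (fun p : ℝ × ℝ => l p.1 p.2))
    (hlsym : ∀ y z : ℝ, l y z = l (-y) (-z))
    (X : Fin n → Fin d → ℝ) (Y : Fin n → ℝ) (δ : ℝ) (hδ : 0 ≤ δ) :
    (⨅ f : {f : (Fin d → ℝ) → ℝ //
        ConvexOn ℝ Set.univ f ∧ ∃ C : ℝ≥0, LipschitzWith C f},
      ⨆ P : {P : Measure ((Fin d → ℝ) × ℝ) // IsProbabilityMeasure P ∧
          transportCost d P
            ((n : ℝ≥0∞)⁻¹ • ∑ i : Fin n, Measure.dirac (X i, Y i)) ≤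
            ENNReal.ofReal δ},
        ∫ q, l q.2 (f.1 q.1) ∂P.1) =
    ⨅ f : {f : (Fin d → ℝ) → ℝ //
        ConvexOn ℝ Set.univ f ∧ ∃ C : ℝ≥0, LipschitzWith C f},
      (δ * lossGradBound l * gradSupNorm d f.1 +
        (1 / n) * ∑ i : Fin n, l (Y i) (f.1 (X i))) := by
  obtain ⟨Cl, hl⟩ := hllip
  simp_rw [one_div]
  refine iInf_congr fun ⟨f, hfc, Cf, hf⟩ => ?_
  set p : Fin n → (Fin d → ℝ) × ℝ := fun i => (X i, Y i)
  obtain ⟨P₀, hP₀, hP₀δ, -⟩ :=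
    exists_lt_integral_loss hn hlconv hl hlsym hfc hf p hδ (sub_one_lt _)
  refine @ciSup_eq_of_forall_le_of_forall_lt_exists_gt _ _ _ _ ⟨⟨P₀, hP₀, hP₀δ⟩⟩ _
    (fun P => integral_loss_le hlconv hl hfc hf p hδ P.2.2) fun w hw => ?_
  obtain ⟨P, hP, hPδ, hwP⟩ := exists_lt_integral_loss hn hlconv hl hlsym hfc hf p hδ hw
  exact ⟨⟨P, hP, hPδ⟩, hwP⟩
end
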